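/- With c = E_{x∼P*}[Δ_x^w·P₀^(w)(x)/(P*)^(w)(x) − Δ_x·P₀(x)/P*(x)], if for all x ∈ X* and all y' ∈ Y the weights satisfy w(x,y') ≤ (Δ_x·E_{P₀}[w] / (Δ_x^w·E_{P*}[w])) · w(x,y*), then c ≤ 0, and hence the success of a Bayes optimal classifier on the weighted mixture satisfies S(α) ≥ 1 − ((1−α_eff)/α_eff)·Δ·ξ. -/

import Mathlib

open Finset

/-! The weight condition, multiplied by `P₀(x, y')` and summed over `y'`, gives for every `x ∈ X*`
`Δ_x^w E_{P*}[w] E_{P₀}[w | x] ≤ Δ_x E_{P₀}[w] w(x, y*) P₀(x)`, which is exactly the nonpositivity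
of the `x`-summand of `c`. The same inequality bounds the mass of a misclassified `x ∈ X*`:
Bayes optimality on the weighted mixture gives
`α w(x, y*) P*(x) ≤ (1 - α) (w P₀(x, f x) - w P₀(x, y*)) ≤ (1 - α) Δ_x^w E_{P₀}[w | x]`,
hence `P*(x) ≤ ((1 - α) E_{P₀}[w] / (α E_{P*}[w])) Δ_x P₀(x)`, and the prefactor is
`(1 - α_eff) / α_eff`. Summing over the misclassified points of `X*` gives the success bound. -/

/-- The `w`-weighted version of a distribution `Q`: `Q^(w)(z) = w(z) Q(z) / E_Q[w]`. -/
noncomputable def wdist {Z : Type*} [Fintype Z] (Q w : Z → ℝ) : Z → ℝ :=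
  fun z => w z * Q z / (∑ z', w z' * Q z')

/-- `condGap P₀ y* x` is the paper's `Δ_x`, and `condGap (wdist P₀ w) y* x` its `Δ_x^w`. -/
noncomputable def condGap {X Y : Type*} [Fintype Y] [Nonempty Y] (Q : X × Y → ℝ) (y₀ : Y)
    (x : X) : ℝ :=
  univ.sup' univ_nonempty fun y : Y =>
    Q (x, y) / (∑ y', Q (x, y')) - Q (x, y₀) / (∑ y', Q (x, y'))

section Gap

variable {X Y : Type*} [Fintype Y] [Nonempty Y]

lemma condGap_nonneg (Q : X × Y → ℝ) (y₀ : Y) (x : X) : 0 ≤ condGap Q y₀ x := by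
  have h := le_sup' (fun y : Y =>
    Q (x, y) / (∑ y', Q (x, y')) - Q (x, y₀) / (∑ y', Q (x, y'))) (mem_univ y₀)
  rwa [sub_self] at h

lemma sub_le_condGap_mul_sum {Q : X × Y → ℝ} {x : X} (hQ : ∀ y, 0 ≤ Q (x, y)) (y₀ y : Y) :
    Q (x, y) - Q (x, y₀) ≤ condGap Q y₀ x * ∑ y', Q (x, y') := by
  have hle : Q (x, y) / (∑ y', Q (x, y')) - Q (x, y₀) / (∑ y', Q (x, y')) ≤ condGap Q y₀ x :=
    le_sup' (fun y : Y =>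
      Q (x, y) / (∑ y', Q (x, y')) - Q (x, y₀) / (∑ y', Q (x, y'))) (mem_univ y)
  rcases (sum_nonneg fun y' _ => hQ y').lt_or_eq with hpos | hzero
  · rwa [← sub_div, div_le_iff₀ hpos] at hle
  · have hrow := (sum_eq_zero_iff_of_nonneg fun y' _ => hQ y').1 hzero.symm
    simp [hrow]

end Gap

section Weighted

variable {Z : Type*} [Fintype Z]

lemma sum_mul_pos {w Q : Z → ℝ} (hw : ∀ z, 0 < w z) (hQ : ∀ z, 0 ≤ Q z)
    (hQ1 : ∑ z, Q z = 1) : 0 < ∑ z, w z * Q z := by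
  obtain ⟨z, -, hz⟩ := exists_lt_of_sum_lt (s := univ) (f := fun _ => (0 : ℝ)) (g := Q)
    (by simp [hQ1])
  exact sum_pos' (fun z _ => mul_nonneg (hw z).le (hQ z)) ⟨z, mem_univ z, mul_pos (hw z) hz⟩

lemma sum_mul_mix (w P Q : Z → ℝ) (α : ℝ) :
    ∑ z, w z * (α * P z + (1 - α) * Q z) = α * ∑ z, w z * P z + (1 - α) * ∑ z, w z * Q z := by
  simp only [mul_sum, ← sum_add_distrib]
  exact sum_congr rfl fun z _ => by ring

lemma wdist_nonneg {Q w : Z → ℝ} (hQ : ∀ z, 0 ≤ Q z) (hw : ∀ z, 0 ≤ w z) (z : Z) :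
    0 ≤ wdist Q w z :=
  div_nonneg (mul_nonneg (hw z) (hQ z)) (sum_nonneg fun z' _ => mul_nonneg (hw z') (hQ z'))

lemma wdist_le_wdist_iff {Q w : Z → ℝ} (h : 0 < ∑ z, w z * Q z) {z z' : Z} :
    wdist Q w z ≤ wdist Q w z' ↔ w z * Q z ≤ w z' * Q z' :=
  div_le_div_iff_of_pos_right h

lemma sum_wdist_row {X Y : Type*} [Fintype X] [Fintype Y] (Q w : X × Y → ℝ) (x : X) :
    ∑ y, wdist Q w (x, y) = (∑ y, w (x, y) * Q (x, y)) / ∑ z, w z * Q z :=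
  (sum_div _ _ _).symm

end Weighted

/-- `B ≠ 0` is forced by the bound at `i₀`, since `A / 0 = 0`. -/
lemma mul_sum_mul_le_of_le_div_mul {ι : Type*} {s : Finset ι} {a b : ι → ℝ} {A B : ℝ} {i₀ : ι}
    (hi₀ : i₀ ∈ s) (ha₀ : 0 < a i₀) (hb : ∀ i ∈ s, 0 ≤ b i) (hB : 0 ≤ B)
    (hab : ∀ i ∈ s, a i ≤ A / B * a i₀) :
    B * ∑ i ∈ s, a i * b i ≤ A * a i₀ * ∑ i ∈ s, b i := by
  have hB : 0 < B := by
    refine hB.lt_of_ne' fun h => ?_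
    have h₀ := hab i₀ hi₀
    rw [h, div_zero, zero_mul] at h₀
    linarith
  calc B * ∑ i ∈ s, a i * b i ≤ B * ∑ i ∈ s, A / B * a i₀ * b i := by
        gcongr with i hi
        exacts [hb i hi, hab i hi]
    _ = A * a i₀ * ∑ i ∈ s, b i := by
        rw [← mul_sum]
        field_simp

lemma one_sub_div_add_div_div_add {a b : ℝ} (ha : 0 < a) (hab : 0 < a + b) :
    (1 - a / (a + b)) / (a / (a + b)) = b / a := by
  field_simp
  ring

lemma one_sub_le_sum_mul_ite {X : Type*} [Fintype X] (s : Finset X) (hs : s.Nonempty)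
    (p : X → Prop) [DecidablePred p] {π g R : X → ℝ} {K : ℝ}
    (hπ1 : ∑ x, π x = 1) (hπ0 : ∀ x ∉ s, π x = 0) (hK : 0 ≤ K) (hg : ∀ x ∈ s, 0 ≤ g x)
    (hR : ∀ x ∈ s, 0 ≤ R x) (hmiss : ∀ x ∈ s, ¬ p x → π x ≤ K * g x * R x) :
    1 - K * s.sup' hs g * ∑ x ∈ s, R x ≤ ∑ x, π x * if p x then 1 else 0 := by
  have hpoint : ∀ x ∈ s, π x * (1 - if p x then 1 else 0) ≤ K * s.sup' hs g * R x := by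
    intro x hx
    have hgx : g x ≤ s.sup' hs g := le_sup' g hx
    split_ifs with h
    · simpa using mul_nonneg (mul_nonneg hK ((hg x hx).trans hgx)) (hR x hx)
    · calc π x * (1 - 0) ≤ K * g x * R x := by simpa using hmiss x hx h
        _ ≤ K * s.sup' hs g * R x := by gcongr; exact hR x hx
  calc 1 - K * s.sup' hs g * ∑ x ∈ s, R x
      ≤ 1 - ∑ x ∈ s, π x * (1 - if p x then 1 else 0) := by
        rw [mul_sum]
        exact sub_le_sub_left (sum_le_sum hpoint) 1
    _ = 1 - ∑ x, π x * (1 - if p x then 1 else 0) := by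
        rw [sum_subset (subset_univ s) fun x _ hx => by rw [hπ0 x hx, zero_mul]]
    _ = ∑ x, π x * if p x then 1 else 0 := by
        simp only [mul_sub, mul_one, sum_sub_distrib, hπ1]
        ring

section Signal

variable {X Y : Type*} [Fintype Y] [Nonempty Y] {P0 Pstar w : X × Y → ℝ} {ystar : Y} {x : X}

lemma correctiveTerm_summand_nonpos [Fintype X] (hw : ∀ z, 0 < w z)
    (hdet : ∀ y, y ≠ ystar → Pstar (x, y) = 0)
    (hE0 : 0 < ∑ z, w z * P0 z) (hEs : 0 < ∑ z, w z * Pstar z) (hπ : 0 < Pstar (x, ystar))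
    (hkey : condGap (wdist P0 w) ystar x * (∑ z, w z * Pstar z) * ∑ y, w (x, y) * P0 (x, y)
      ≤ condGap P0 ystar x * (∑ z, w z * P0 z) * w (x, ystar) * ∑ y, P0 (x, y)) :
    (∑ y, Pstar (x, y)) *
      (condGap (wdist P0 w) ystar x * (∑ y, wdist P0 w (x, y)) / (∑ y, wdist Pstar w (x, y))
        - condGap P0 ystar x * (∑ y, P0 (x, y)) / (∑ y, Pstar (x, y))) ≤ 0 := by
  have hrow : ∀ v : X × Y → ℝ, ∑ y, v (x, y) * Pstar (x, y) = v (x, ystar) * Pstar (x, ystar) :=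
    fun v => Fintype.sum_eq_single ystar fun y hy => by rw [hdet y hy, mul_zero]
  rw [sum_wdist_row, sum_wdist_row, hrow w, Fintype.sum_eq_single ystar hdet]
  refine mul_nonpos_of_nonneg_of_nonpos hπ.le (sub_nonpos.2 ?_)
  have hwx := hw (x, ystar)
  calc _ = condGap (wdist P0 w) ystar x * (∑ z, w z * Pstar z) * (∑ y, w (x, y) * P0 (x, y))
        / ((∑ z, w z * P0 z) * w (x, ystar) * Pstar (x, ystar)) := by
        field_simp
    _ ≤ condGap P0 ystar x * (∑ z, w z * P0 z) * w (x, ystar) * (∑ y, P0 (x, y))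
        / ((∑ z, w z * P0 z) * w (x, ystar) * Pstar (x, ystar)) := by
        gcongr
    _ = _ := by
        field_simp

lemma mass_le_of_bayes_ne [Fintype X] {α : ℝ} (hw : ∀ z, 0 < w z) (hP0 : ∀ z, 0 ≤ P0 z)
    (hα : 0 < α) (hα1 : α ≤ 1) (hE0 : 0 < ∑ z, w z * P0 z) (hEs : 0 < ∑ z, w z * Pstar z)
    {y : Y} (hy : Pstar (x, y) = 0)
    (hbayes : wdist (fun z => α * Pstar z + (1 - α) * P0 z) w (x, ystar)
      ≤ wdist (fun z => α * Pstar z + (1 - α) * P0 z) w (x, y))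
    (hkey : condGap (wdist P0 w) ystar x * (∑ z, w z * Pstar z) * ∑ y, w (x, y) * P0 (x, y)
      ≤ condGap P0 ystar x * (∑ z, w z * P0 z) * w (x, ystar) * ∑ y, P0 (x, y)) :
    Pstar (x, ystar) ≤ (1 - α) * (∑ z, w z * P0 z) / (α * ∑ z, w z * Pstar z)
      * condGap P0 ystar x * ∑ y, P0 (x, y) := by
  set E0 := ∑ z, w z * P0 z
  set Es := ∑ z, w z * Pstar z
  set G := condGap (wdist P0 w) ystar x
  set S := ∑ y, w (x, y) * P0 (x, y)
  have h1α : 0 ≤ 1 - α := sub_nonneg.2 hα1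
  have hmix : 0 < ∑ z, w z * (α * Pstar z + (1 - α) * P0 z) := by
    rw [sum_mul_mix]
    exact add_pos_of_pos_of_nonneg (mul_pos hα hEs) (mul_nonneg h1α hE0.le)
  have hb := (wdist_le_wdist_iff hmix).1 hbayes
  rw [hy] at hb
  have hgap : w (x, y) * P0 (x, y) - w (x, ystar) * P0 (x, ystar) ≤ G * S := by
    have h := sub_le_condGap_mul_sum (fun y => wdist_nonneg hP0 (fun z => (hw z).le) (x, y))
      ystar y
    rwa [sum_wdist_row, wdist, wdist, ← sub_div, mul_div_assoc',
      div_le_div_iff_of_pos_right hE0] at h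
  have hmass : α * w (x, ystar) * Pstar (x, ystar) ≤ (1 - α) * (G * S) := by
    nlinarith [mul_le_mul_of_nonneg_left hgap h1α, hP0 (x, ystar), hw (x, ystar)]
  have hwmass : w (x, ystar) * (Pstar (x, ystar) * (α * Es))
      ≤ w (x, ystar) * ((1 - α) * E0 * condGap P0 ystar x * ∑ y, P0 (x, y)) :=
    calc _ = α * w (x, ystar) * Pstar (x, ystar) * Es := by ring
      _ ≤ (1 - α) * (G * S) * Es := by gcongr
      _ = (1 - α) * (G * Es * S) := by ring
      _ ≤ (1 - α) * (condGap P0 ystar x * E0 * w (x, ystar) * ∑ y, P0 (x, y)) := by gcongr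
      _ = _ := by ring
  rw [div_mul_eq_mul_div, div_mul_eq_mul_div, le_div_iff₀ (mul_pos hα hEs)]
  exact le_of_mul_le_mul_left hwmass (hw _)

end Signal

theorem stmt10_general {X Y : Type*} [Fintype X] [Fintype Y] [DecidableEq Y]
    [Nonempty Y]
    (P0 Pstar : X × Y → ℝ) (w : X × Y → ℝ) (α αeff c : ℝ) (ystar : Y) (f : X → Y)
    (Xstar : Finset X) (hXne : Xstar.Nonempty)
    (hP0 : ∀ z, 0 ≤ P0 z) (hP0sum : ∑ z, P0 z = 1)
    (hPstar : ∀ z, 0 ≤ Pstar z) (hPstarsum : ∑ z, Pstar z = 1)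
    (hw : ∀ z, 0 < w z) (hα : 0 < α) (hα1 : α < 1)
    (hdet : ∀ x y, y ≠ ystar → Pstar (x, y) = 0)
    (hsupp : ∀ x, x ∈ Xstar ↔ (∑ y, Pstar (x, y)) ≠ 0)
    (hαeff : αeff = α * (∑ z, w z * Pstar z)
        / (∑ z, w z * (α * Pstar z + (1 - α) * P0 z)))
    -- f is Bayes optimal on the weighted mixture (P_α)^(w):
    (hBayes : ∀ x y, wdist (fun z => α * Pstar z + (1 - α) * P0 z) w (x, y)
        ≤ wdist (fun z => α * Pstar z + (1 - α) * P0 z) w (x, f x))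
    (Δx Δxw : X → ℝ)
    (hΔx : ∀ x, Δx x = Finset.univ.sup' Finset.univ_nonempty (fun y : Y =>
        P0 (x, y) / (∑ y', P0 (x, y')) - P0 (x, ystar) / (∑ y', P0 (x, y'))))
    (hΔxw : ∀ x, Δxw x = Finset.univ.sup' Finset.univ_nonempty (fun y : Y =>
        wdist P0 w (x, y) / (∑ y', wdist P0 w (x, y'))
          - wdist P0 w (x, ystar) / (∑ y', wdist P0 w (x, y'))))
    (hc : c = ∑ x, (∑ y, Pstar (x, y)) *
        (Δxw x * (∑ y, wdist P0 w (x, y)) / (∑ y, wdist Pstar w (x, y))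
          - Δx x * (∑ y, P0 (x, y)) / (∑ y, Pstar (x, y))))
    -- the weight condition:
    (hwcond : ∀ x ∈ Xstar, ∀ y : Y,
        w (x, y) ≤ (Δx x * (∑ z, w z * P0 z)) / (Δxw x * (∑ z, w z * Pstar z))
          * w (x, ystar)) :
    c ≤ 0 ∧
    (∑ x, (∑ y, Pstar (x, y)) * (if f x = ystar then 1 else 0))
      ≥ 1 - ((1 - αeff) / αeff) * (Xstar.sup' hXne Δx)
          * (∑ x ∈ Xstar, ∑ y, P0 (x, y)) := by
  obtain rfl : Δx = condGap P0 ystar := funext hΔx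
  obtain rfl : Δxw = condGap (wdist P0 w) ystar := funext hΔxw
  subst hc hαeff
  have hE0 := sum_mul_pos hw hP0 hP0sum
  have hEs := sum_mul_pos hw hPstar hPstarsum
  have hrow : ∀ x, ∑ y, Pstar (x, y) = Pstar (x, ystar) :=
    fun x => Fintype.sum_eq_single ystar (hdet x)
  have hin : ∀ x ∈ Xstar, 0 < Pstar (x, ystar) :=
    fun x hx => (hPstar _).lt_of_ne' (hrow x ▸ (hsupp x).1 hx)
  have hout : ∀ x ∉ Xstar, ∑ y, Pstar (x, y) = 0 := fun x hx => not_not.1 (mt (hsupp x).2 hx)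
  have hkey : ∀ x ∈ Xstar,
      condGap (wdist P0 w) ystar x * (∑ z, w z * Pstar z) * ∑ y, w (x, y) * P0 (x, y)
        ≤ condGap P0 ystar x * (∑ z, w z * P0 z) * w (x, ystar) * ∑ y, P0 (x, y) :=
    fun x hx => mul_sum_mul_le_of_le_div_mul (mem_univ ystar) (hw _) (fun y _ => hP0 _)
      (mul_nonneg (condGap_nonneg _ _ _) hEs.le) fun y _ => hwcond x hx y
  refine ⟨sum_nonpos fun x _ => ?_, ?_⟩
  · by_cases hx : x ∈ Xstar
    · exact correctiveTerm_summand_nonpos hw (hdet x) hE0 hEs (hin x hx) (hkey x hx)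
    · rw [hout x hx, zero_mul]
  · rw [sum_mul_mix, one_sub_div_add_div_div_add (mul_pos hα hEs)
      (add_pos_of_pos_of_nonneg (mul_pos hα hEs) (mul_nonneg (by linarith) hE0.le))]
    refine one_sub_le_sum_mul_ite Xstar hXne (fun x => f x = ystar)
      (by rwa [← Fintype.sum_prod_type']) hout (by positivity)
      (fun x _ => condGap_nonneg _ _ _) (fun x _ => sum_nonneg fun y _ => hP0 _) ?_
    intro x hx hfx
    rw [hrow x]
    exact mass_le_of_bayes_ne hw hP0 hα hα1.le hE0 hEs (hdet x _ hfx) (hBayes x ystar)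
      (hkey x hx)

/-- if the weights satisfy
`w(x,y') ≤ (Δ_x E_{P₀}[w] / (Δ_x^w E_{P*}[w])) w(x,y*)` on the signal set, then the
corrective term `c` is nonpositive and the weighted success bound
`S(α) ≥ 1 - ((1-α_eff)/α_eff) Δ ξ` holds. -/
theorem stmt10 {X Y : Type*} [Fintype X] [Fintype Y] [DecidableEq X] [DecidableEq Y]
    [Nonempty Y]
    (P0 Pstar : X × Y → ℝ) (w : X × Y → ℝ) (α αeff c : ℝ) (ystar : Y) (f : X → Y)
    (Xstar : Finset X) (hXne : Xstar.Nonempty)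
    (hP0 : ∀ z, 0 ≤ P0 z) (hP0sum : ∑ z, P0 z = 1)
    (hPstar : ∀ z, 0 ≤ Pstar z) (hPstarsum : ∑ z, Pstar z = 1)
    (hw : ∀ z, 0 < w z) (hα : 0 < α) (hα1 : α < 1)
    (hdet : ∀ x y, y ≠ ystar → Pstar (x, y) = 0)
    (hsupp : ∀ x, x ∈ Xstar ↔ (∑ y, Pstar (x, y)) ≠ 0)
    (hαeff : αeff = α * (∑ z, w z * Pstar z)
        / (∑ z, w z * (α * Pstar z + (1 - α) * P0 z)))
    -- f is Bayes optimal on the weighted mixture (P_α)^(w):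
    (hBayes : ∀ x y, wdist (fun z => α * Pstar z + (1 - α) * P0 z) w (x, y)
        ≤ wdist (fun z => α * Pstar z + (1 - α) * P0 z) w (x, f x))
    (Δx Δxw : X → ℝ)
    (hΔx : ∀ x, Δx x = Finset.univ.sup' Finset.univ_nonempty (fun y : Y =>
        P0 (x, y) / (∑ y', P0 (x, y')) - P0 (x, ystar) / (∑ y', P0 (x, y'))))
    (hΔxw : ∀ x, Δxw x = Finset.univ.sup' Finset.univ_nonempty (fun y : Y =>
        wdist P0 w (x, y) / (∑ y', wdist P0 w (x, y'))
          - wdist P0 w (x, ystar) / (∑ y', wdist P0 w (x, y'))))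
    (hc : c = ∑ x, (∑ y, Pstar (x, y)) *
        (Δxw x * (∑ y, wdist P0 w (x, y)) / (∑ y, wdist Pstar w (x, y))
          - Δx x * (∑ y, P0 (x, y)) / (∑ y, Pstar (x, y))))
    -- the weight condition:
    (hwcond : ∀ x ∈ Xstar, ∀ y : Y,
        w (x, y) ≤ (Δx x * (∑ z, w z * P0 z)) / (Δxw x * (∑ z, w z * Pstar z))
          * w (x, ystar)) :
    c ≤ 0 ∧
    (∑ x, (∑ y, Pstar (x, y)) * (if f x = ystar then 1 else 0))
      ≥ 1 - ((1 - αeff) / αeff) * (Xstar.sup' hXne Δx)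
          * (∑ x ∈ Xstar, ∑ y, P0 (x, y)) :=
  stmt10_general P0 Pstar w α αeff c ystar f Xstar hXne hP0 hP0sum hPstar hPstarsum hw hα hα1 hdet
    hsupp hαeff hBayes Δx Δxw hΔx hΔxw hc hwcond
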